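/- Let G = (V, E, w) be a weighted graph and u: V × [a,b] → ℝ with u(·,t), ∂_t u(·,t) ∈ W^{1,2}_μ(V) at each time slice. Suppose ∂_t u = Δu + c(x)u for some bounded function c: V → ℝ. If u(·, b) ≡ 0, then u ≡ 0 on V × [a,b]. -/

import Mathlib

/-
The energy `I(t) = Σ_x u(x,t)² μ(x)` is the supremum of the finite partial energies
`E_F(t) = Σ_{x ∈ F} u(x,t)² μ(x)`. Each `E_F` is differentiable, and the symmetry of `w` gives
`|E_F'(t)| ≤ (4 + 2M) I(t)`. Hence `I` is lower semicontinuous and its increments are bounded by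
`K ∫ I` whenever `I` is integrable. A Baire category argument shows that `I` is integrable on
`[a, b]`; then Gronwall's inequality, run backwards from `I(b) = 0`, forces `I ≡ 0`. Vertices with
`μ(x) = 0` are decoupled from the rest and solve the scalar equation `u' = c u`.
-/

open scoped BigOperators

noncomputable def vmu {V : Type*} (w : V → V → ℝ) (x : V) : ℝ := ∑' y, w x y

noncomputable def glap {V : Type*} (w : V → V → ℝ) (f : V → ℝ) (x : V) : ℝ :=
  (∑' y, w x y * (f y - f x)) / vmu w x

/-- Squared gradient `|∇f|²(x) = Σ_y (w x y / μ x) (f y - f x)²`. -/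
noncomputable def gnormSq {V : Type*} (w : V → V → ℝ) (f : V → ℝ) (x : V) : ℝ :=
  ∑' y, (w x y / vmu w x) * (f y - f x)^2

/-- `I(t) = Σ_x u(x,t)² μ(x)`. -/
noncomputable def Ifun {V : Type*} (w : V → V → ℝ) (u : V → ℝ → ℝ) (t : ℝ) : ℝ :=
  ∑' x, (u x t)^2 * vmu w x

/-- `D(t) = -Σ_x |∇u|²(x,t) μ(x)`. -/
noncomputable def Dfun {V : Type*} (w : V → V → ℝ) (u : V → ℝ → ℝ) (t : ℝ) : ℝ :=
  -∑' x, gnormSq w (fun y => u y t) x * vmu w x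

/-- The parabolic frequency `U(t) = D(t)/I(t)`. -/
noncomputable def Ufun {V : Type*} (w : V → V → ℝ) (u : V → ℝ → ℝ) (t : ℝ) : ℝ :=
  Dfun w u t / Ifun w u t

open MeasureTheory Set Filter Topology Real Metric

theorem le_mul_exp_of_le_add_integral {g : ℝ → ℝ} {A K t₀ t₁ : ℝ} (hK : 0 ≤ K) (h01 : t₀ ≤ t₁)
    (hg : IntervalIntegrable g volume t₀ t₁)
    (h : ∀ t ∈ Icc t₀ t₁, g t ≤ A + K * ∫ s in t₀..t, g s) :
    g t₁ ≤ A * exp (K * (t₁ - t₀)) := by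
  -- `g ≤ Φ ≤ Ψ`, where `Φ` is continuous, so that `Ψ` is differentiable with `Ψ' = K Φ ≤ K Ψ`
  set Φ : ℝ → ℝ := fun t => A + K * ∫ s in t₀..(projIcc t₀ t₁ h01 t : ℝ), g s
  have hΦ : Continuous Φ := by
    have hprim := intervalIntegral.continuousOn_primitive_interval
      ((intervalIntegrable_iff_integrableOn_Icc_of_le h01).1 hg |>.mono_set (uIcc_of_le h01).subset)
    rw [uIcc_of_le h01] at hprim
    exact continuous_const.add <| continuous_const.mul <|
      hprim.comp_continuous (continuous_subtype_val.comp continuous_projIcc) fun t => Subtype.prop _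
  have hΦeq : ∀ t ∈ Icc t₀ t₁, Φ t = A + K * ∫ s in t₀..t, g s := fun t ht => by
    simp only [Φ, projIcc_of_mem h01 ht]
  set Ψ : ℝ → ℝ := fun t => A + K * ∫ s in t₀..t, Φ s
  have hΨ : ∀ t, HasDerivAt Ψ (K * Φ t) t := fun t =>
    ((hΦ.integral_hasStrictDerivAt t₀ t).hasDerivAt.const_mul K).const_add A
  have hΦΨ : ∀ t ∈ Icc t₀ t₁, Φ t ≤ Ψ t := fun t ht => by
    rw [hΦeq t ht]
    dsimp only [Ψ]
    gcongr
    refine intervalIntegral.integral_mono_on ht.1 (hg.mono_set ?_) (hΦ.intervalIntegrable _ _)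
      fun s hs => (h s ⟨hs.1, hs.2.trans ht.2⟩).trans (hΦeq s ⟨hs.1, hs.2.trans ht.2⟩).ge
    rw [uIcc_of_le h01, uIcc_of_le ht.1]
    exact Icc_subset_Icc_right ht.2
  have hΨle := le_gronwallBound_of_liminf_deriv_right_le (f := Ψ) (f' := fun t => K * Φ t)
    (δ := A) (ε := 0) (fun t _ => (hΨ t).continuousAt.continuousWithinAt)
    (fun t _ r hr => (hΨ t).hasDerivWithinAt.liminf_right_slope_le hr) (by simp [Ψ])
    (fun t ht => by simpa using mul_le_mul_of_nonneg_left (hΦΨ t (Ico_subset_Icc_self ht)) hK)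
    t₁ ⟨h01, le_rfl⟩
  rw [gronwallBound_ε0] at hΨle
  calc g t₁ ≤ Φ t₁ := (h t₁ ⟨h01, le_rfl⟩).trans (hΦeq t₁ ⟨h01, le_rfl⟩).ge
    _ ≤ Ψ t₁ := hΦΨ t₁ ⟨h01, le_rfl⟩
    _ ≤ A * exp (K * (t₁ - t₀)) := hΨle

theorem integrableOn_of_nonneg_of_le {α : Type*} [MeasurableSpace α] {μ : Measure α} {g : α → ℝ}
    {s : Set α} {C : ℝ} (hg : Measurable g) (hg0 : ∀ t, 0 ≤ g t) (hs : MeasurableSet s)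
    (hμs : μ s ≠ ⊤) (hC : ∀ t ∈ s, g t ≤ C) : IntegrableOn g s μ :=
  Measure.integrableOn_of_bounded hμs hg.aestronglyMeasurable <|
    ae_restrict_of_forall_mem hs fun t ht => by
      rw [Real.norm_eq_abs, abs_of_nonneg (hg0 t)]; exact hC t ht

theorem intervalIntegrable_of_integrableAtFilter {g : ℝ → ℝ} {s : Set ℝ} {p q : ℝ} (hpq : p ≤ q)
    (hs : Icc p q ⊆ s) (h : ∀ t ∈ Icc p q, IntegrableAtFilter g (𝓝[s] t)) :
    IntervalIntegrable g volume p q :=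
  (intervalIntegrable_iff_integrableOn_Icc_of_le hpq).2 <|
    LocallyIntegrableOn.integrableOn_isCompact
      (fun t ht => (h t ht).filter_mono (nhdsWithin_mono _ hs)) isCompact_Icc

theorem IsClosed.setOf_not_integrableAtFilter {X E : Type*} [TopologicalSpace X]
    [MeasurableSpace X] [NormedAddCommGroup E] {μ : Measure X} {f : X → E} {s : Set X}
    (hs : IsClosed s) : IsClosed {x ∈ s | ¬IntegrableAtFilter f (𝓝[s] x) μ} := by
  refine isOpen_compl_iff.1 (isOpen_iff_mem_nhds.2 fun x hx => ?_)
  by_cases hxs : x ∈ s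
  · obtain ⟨U, hU, hfU⟩ := not_not.1 fun h => hx ⟨hxs, h⟩
    obtain ⟨V, hV, hVU⟩ := mem_nhdsWithin_iff_exists_mem_nhds_inter.1 hU
    filter_upwards [eventually_mem_nhds_iff.2 hV] with y hy hbad
    exact hbad.2 ⟨U, mem_nhdsWithin_iff_exists_mem_nhds_inter.2 ⟨V, hy, hVU⟩, hfU⟩
  · filter_upwards [hs.isOpen_compl.mem_nhds hxs] with y hy hbad using hy hbad.1

theorem LowerSemicontinuous.exists_le_on_inter_ball {X : Type*} [MetricSpace X] [CompleteSpace X]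
    {f : X → ℝ} (hf : LowerSemicontinuous f) {B : Set X} (hB : IsClosed B) (hne : B.Nonempty) :
    ∃ z ∈ B, ∃ ε > 0, ∃ N, ∀ x ∈ B ∩ ball z ε, f x ≤ N := by
  have : CompleteSpace B := hB.completeSpace_coe
  have : Nonempty B := hne.to_subtype
  obtain ⟨n, z, hz⟩ := nonempty_interior_of_iUnion_of_closed (f := fun n : ℕ => {x : B | f x ≤ n})
    (fun n => (hf.isClosed_preimage n).preimage continuous_subtype_val)
    (iUnion_eq_univ_iff.2 fun x => exists_nat_ge (f x))
  obtain ⟨ε, hε, hball⟩ := Metric.mem_nhds_iff.1 (mem_interior_iff_mem_nhds.1 hz)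
  exact ⟨z, z.2, ε, hε, n, fun x hx => hball (show (⟨x, hx.1⟩ : B) ∈ ball z ε from hx.2)⟩

theorem lowerSemicontinuous_of_isLUB {X ι α : Type*} [TopologicalSpace X] [LinearOrder α]
    [TopologicalSpace α] [OrderTopology α] {E : ι → X → α} {g : X → α}
    (hE : ∀ i, Continuous (E i)) (hg : ∀ x, IsLUB (range fun i => E i x) (g x)) :
    LowerSemicontinuous g := by
  intro x y hy
  obtain ⟨_, ⟨i, rfl⟩, hi⟩ := (lt_isLUB_iff (hg x)).1 hy
  filter_upwards [(hE i).continuousAt.eventually (lt_mem_nhds hi)] with x' hx'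
  exact hx'.trans_le ((hg x').1 ⟨i, rfl⟩)

theorem eq_zero_of_hasDerivAt_const_mul_of_eq_zero_right {f : ℝ → ℝ} {c a b : ℝ}
    (hf : ∀ t ∈ Icc a b, HasDerivAt f (c * f t) t) (hb : f b = 0) : ∀ t ∈ Icc a b, f t = 0 := by
  have hf' : ∀ s ∈ Icc (-b) (-a), HasDerivAt (fun s => f (-s)) (-(c * f (-s))) s := fun s hs =>
    ((hf (-s) ⟨by linarith [hs.2], by linarith [hs.1]⟩).comp s (hasDerivAt_neg s)).congr_deriv
      (by ring)
  intro t ht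
  simpa using eq_zero_of_abs_deriv_le_mul_abs_self_of_eq_zero_right (K := |c|)
    (fun s hs => (hf' s hs).continuousAt.continuousWithinAt)
    (fun s hs => (hf' s (Ico_subset_Icc_self hs)).hasDerivWithinAt) (by simpa using hb)
    (fun s _ => by simp) (-t) ⟨by linarith [ht.2], by linarith [ht.1]⟩

def IncrementsLeIntegralOn (K : ℝ) (g : ℝ → ℝ) (s : Set ℝ) : Prop :=
  ∀ t ∈ s, ∀ t' ∈ s, t ≤ t' → IntervalIntegrable g volume t t' →
    |g t' - g t| ≤ K * ∫ σ in t..t', g σ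

namespace IncrementsLeIntegralOn

variable {K a b : ℝ} {g : ℝ → ℝ}

theorem mono {s s' : Set ℝ} (h : IncrementsLeIntegralOn K g s) (hs : s' ⊆ s) :
    IncrementsLeIntegralOn K g s' :=
  fun t ht t' ht' => h t (hs ht) t' (hs ht')

theorem comp_neg (h : IncrementsLeIntegralOn K g (Icc a b)) :
    IncrementsLeIntegralOn K (fun t => g (-t)) (Icc (-b) (-a)) := by
  intro t ht t' ht' htt' hint
  rw [intervalIntegral.integral_comp_neg, abs_sub_comm]
  refine h (-t') ⟨?_, ?_⟩ (-t) ⟨?_, ?_⟩ (neg_le_neg htt') ?_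
  any_goals linarith [ht.1, ht.2, ht'.1, ht'.2]
  exact (IntervalIntegrable.iff_comp_neg).2 (by simpa using hint.symm)

theorem right_le_mul_exp (h : IncrementsLeIntegralOn K g (Icc a b)) (hK : 0 ≤ K) (hab : a ≤ b)
    (hint : IntervalIntegrable g volume a b) : g b ≤ g a * exp (K * (b - a)) := by
  refine le_mul_exp_of_le_add_integral hK hab hint fun t ht => ?_
  have hint' : IntervalIntegrable g volume a t := hint.mono_set <| by
    rw [uIcc_of_le hab, uIcc_of_le ht.1]; exact Icc_subset_Icc_right ht.2
  linarith [le_abs_self (g t - g a), h a ⟨le_rfl, hab⟩ t ht ht.1 hint']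

theorem left_le_mul_exp (h : IncrementsLeIntegralOn K g (Icc a b)) (hK : 0 ≤ K) (hab : a ≤ b)
    (hint : IntervalIntegrable g volume a b) : g a ≤ g b * exp (K * (b - a)) := by
  have := h.comp_neg.right_le_mul_exp hK (neg_le_neg hab)
    ((IntervalIntegrable.iff_comp_neg).1 hint).symm
  simpa [sub_eq_add_neg, add_comm] using this

theorem right_le_mul_exp_of_forall_Ioc (h : IncrementsLeIntegralOn K g (Icc a b))
    (hg : Measurable g) (hg0 : ∀ t, 0 ≤ g t) (hK : 0 ≤ K) (hab : a ≤ b)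
    (hint : ∀ p ∈ Ioc a b, IntervalIntegrable g volume p b) : g b ≤ g a * exp (K * (b - a)) := by
  have hbound : ∀ p ∈ Ioc a b, g p ≤ g b * exp (K * (b - a)) := fun p hp =>
    ((h.mono (Icc_subset_Icc_left hp.1.le)).left_le_mul_exp hK hp.2 (hint p hp)).trans <| by
      gcongr
      · exact hg0 b
      · linarith [hp.1]
  refine h.right_le_mul_exp hK hab ?_
  exact (intervalIntegrable_iff_integrableOn_Ioc_of_le hab).2 <|
    integrableOn_of_nonneg_of_le hg hg0 measurableSet_Ioc measure_Ioc_lt_top.ne hbound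

theorem left_le_mul_exp_of_forall_Ico (h : IncrementsLeIntegralOn K g (Icc a b))
    (hg : Measurable g) (hg0 : ∀ t, 0 ≤ g t) (hK : 0 ≤ K) (hab : a ≤ b)
    (hint : ∀ p ∈ Ico a b, IntervalIntegrable g volume a p) : g a ≤ g b * exp (K * (b - a)) := by
  have := h.comp_neg.right_le_mul_exp_of_forall_Ioc (hg.comp measurable_neg) (fun t => hg0 _) hK
    (neg_le_neg hab) fun p hp => by
      have := hint (-p) ⟨by linarith [hp.2], by linarith [hp.1]⟩
      simpa using ((IntervalIntegrable.iff_comp_neg).1 this).symm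
  simpa [sub_eq_add_neg, add_comm] using this

-- `γ` is the point of `B` nearest to `σ` on the side of `z`, so `g` is locally integrable on
-- `(γ, σ]` and the bound at `γ` propagates to `σ`.
theorem exists_le_mul_exp_of_lt (h : IncrementsLeIntegralOn K g (Icc a b))
    (hg : Measurable g) (hg0 : ∀ t, 0 ≤ g t) (hK : 0 ≤ K) {B : Set ℝ} (hB : IsClosed B)
    (hgood : ∀ t ∈ Icc a b \ B, IntegrableAtFilter g (𝓝[Icc a b] t))
    {z σ : ℝ} (hz : z ∈ B ∩ Icc a b) (hσ : σ ∈ Icc a b \ B) (hzσ : z < σ) :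
    ∃ γ ∈ B ∩ Icc z σ, g σ ≤ g γ * exp (K * (b - a)) := by
  set γ := sSup (B ∩ Icc z σ)
  have hbdd : BddAbove (B ∩ Icc z σ) := bddAbove_Icc.mono inter_subset_right
  have hγ : γ ∈ B ∩ Icc z σ := (hB.inter isClosed_Icc).csSup_mem ⟨z, hz.1, le_rfl, hzσ.le⟩ hbdd
  have hγσ : γ < σ := hγ.2.2.lt_of_ne fun e => hσ.2 (e ▸ hγ.1)
  have hint : ∀ p ∈ Ioc γ σ, IntervalIntegrable g volume p σ := by
    intro p hp
    refine intervalIntegrable_of_integrableAtFilter hp.2 (Icc_subset_Icc ?_ hσ.1.2)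
      fun t ht => hgood t ⟨⟨?_, ht.2.trans hσ.1.2⟩, fun htB => ?_⟩
    · linarith [hp.1, hγ.2.1, hz.2.1]
    · linarith [ht.1, hp.1, hγ.2.1, hz.2.1]
    · linarith [le_csSup hbdd ⟨htB, by linarith [ht.1, hp.1, hγ.2.1], ht.2⟩, hp.1, ht.1]
  have hsub : Icc γ σ ⊆ Icc a b := Icc_subset_Icc (hz.2.1.trans hγ.2.1) hσ.1.2
  refine ⟨γ, hγ, ((h.mono hsub).right_le_mul_exp_of_forall_Ioc hg hg0 hK hγσ.le hint).trans ?_⟩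
  exact mul_le_mul_of_nonneg_left (exp_le_exp.2 (mul_le_mul_of_nonneg_left
    (by linarith [hγ.2.1, hz.2.1, hσ.1.2]) hK)) (hg0 γ)

theorem exists_le_mul_exp_of_gt (h : IncrementsLeIntegralOn K g (Icc a b))
    (hg : Measurable g) (hg0 : ∀ t, 0 ≤ g t) (hK : 0 ≤ K) {B : Set ℝ} (hB : IsClosed B)
    (hgood : ∀ t ∈ Icc a b \ B, IntegrableAtFilter g (𝓝[Icc a b] t))
    {z σ : ℝ} (hz : z ∈ B ∩ Icc a b) (hσ : σ ∈ Icc a b \ B) (hσz : σ < z) :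
    ∃ γ ∈ B ∩ Icc σ z, g σ ≤ g γ * exp (K * (b - a)) := by
  set γ := sInf (B ∩ Icc σ z)
  have hbdd : BddBelow (B ∩ Icc σ z) := bddBelow_Icc.mono inter_subset_right
  have hγ : γ ∈ B ∩ Icc σ z := (hB.inter isClosed_Icc).csInf_mem ⟨z, hz.1, hσz.le, le_rfl⟩ hbdd
  have hσγ : σ < γ := hγ.2.1.lt_of_ne fun e => hσ.2 (e ▸ hγ.1)
  have hint : ∀ p ∈ Ico σ γ, IntervalIntegrable g volume σ p := by
    intro p hp
    refine intervalIntegrable_of_integrableAtFilter hp.1 (Icc_subset_Icc hσ.1.1 ?_)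
      fun t ht => hgood t ⟨⟨hσ.1.1.trans ht.1, ?_⟩, fun htB => ?_⟩
    · linarith [hp.2, hγ.2.2, hz.2.2]
    · linarith [ht.2, hp.2, hγ.2.2, hz.2.2]
    · linarith [csInf_le hbdd ⟨htB, ht.1, by linarith [ht.2, hp.2, hγ.2.2]⟩, hp.2, ht.2]
  have hsub : Icc σ γ ⊆ Icc a b := Icc_subset_Icc hσ.1.1 (hγ.2.2.trans hz.2.2)
  refine ⟨γ, hγ, ((h.mono hsub).left_le_mul_exp_of_forall_Ico hg hg0 hK hσγ.le hint).trans ?_⟩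
  exact mul_le_mul_of_nonneg_left (exp_le_exp.2 (mul_le_mul_of_nonneg_left
    (by linarith [hγ.2.2, hz.2.2, hσ.1.1]) hK)) (hg0 γ)

theorem integrableOn (h : IncrementsLeIntegralOn K g (Icc a b)) (hg : LowerSemicontinuous g)
    (hg0 : ∀ t, 0 ≤ g t) (hK : 0 ≤ K) : IntegrableOn g (Icc a b) := by
  set B := {t ∈ Icc a b | ¬IntegrableAtFilter g (𝓝[Icc a b] t)}
  have hgood : ∀ t ∈ Icc a b \ B, IntegrableAtFilter g (𝓝[Icc a b] t) :=
    fun t ht => not_not.1 fun hbad => ht.2 ⟨ht.1, hbad⟩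
  rcases B.eq_empty_or_nonempty with hB | hB
  · exact LocallyIntegrableOn.integrableOn_isCompact
      (fun t ht => hgood t ⟨ht, by simp [hB]⟩) isCompact_Icc
  have hBc : IsClosed B := isClosed_Icc.setOf_not_integrableAtFilter
  -- Baire: on a relatively open piece of `B` the function is bounded; propagating this bound to the
  -- neighbouring good points shows that `g` is integrable near such a point of `B` after all.
  obtain ⟨z, hzB, ε, hε, N, hN⟩ := hg.exists_le_on_inter_ball hBc hB
  exfalso
  refine hzB.2 ⟨Icc a b ∩ ball z ε, inter_mem_nhdsWithin _ (ball_mem_nhds z hε),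
    integrableOn_of_nonneg_of_le (C := max N 0 * exp (K * (b - a))) hg.measurable hg0
      (measurableSet_Icc.inter measurableSet_ball)
      ((measure_mono inter_subset_left).trans_lt measure_Icc_lt_top).ne fun σ hσ => ?_⟩
  have hNC : max N 0 ≤ max N 0 * exp (K * (b - a)) := by
    refine le_mul_of_one_le_right (le_max_right _ _) (one_le_exp (mul_nonneg hK ?_))
    linarith [hσ.1.1, hσ.1.2]
  by_cases hσB : σ ∈ B
  · exact (hN σ ⟨hσB, hσ.2⟩).trans ((le_max_left _ _).trans hNC)
  obtain ⟨γ, hγ, hσγ⟩ : ∃ γ ∈ B ∩ uIcc z σ, g σ ≤ g γ * exp (K * (b - a)) := by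
    rcases (show σ ≠ z from fun e => hσB (e ▸ hzB)).lt_or_gt with hσz | hzσ
    · obtain ⟨γ, hγ, hσγ⟩ := h.exists_le_mul_exp_of_gt hg.measurable hg0 hK hBc hgood
        ⟨hzB, hzB.1⟩ ⟨hσ.1, hσB⟩ hσz
      exact ⟨γ, ⟨hγ.1, uIcc_comm σ z ▸ Icc_subset_uIcc hγ.2⟩, hσγ⟩
    · obtain ⟨γ, hγ, hσγ⟩ := h.exists_le_mul_exp_of_lt hg.measurable hg0 hK hBc hgood
        ⟨hzB, hzB.1⟩ ⟨hσ.1, hσB⟩ hzσ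
      exact ⟨γ, ⟨hγ.1, Icc_subset_uIcc hγ.2⟩, hσγ⟩
  have hγball : γ ∈ ball z ε := by
    rw [Real.ball_eq_Ioo] at hσ ⊢
    exact ordConnected_Ioo.uIcc_subset (by simp [hε]) hσ.2 hγ.2
  refine hσγ.trans (mul_le_mul_of_nonneg_right ((hN γ ⟨hγ.1, hγball⟩).trans (le_max_left _ _))
    (exp_pos _).le)

end IncrementsLeIntegralOn

section Envelope

variable {ι : Type*} {E E' : ι → ℝ → ℝ} {g : ℝ → ℝ} {K a b : ℝ}

theorem incrementsLeIntegralOn_of_isLUB (hE : ∀ i, ∀ t ∈ Icc a b, HasDerivAt (E i) (E' i t) t)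
    (hE' : ∀ i, ∀ t ∈ Icc a b, |E' i t| ≤ K * g t)
    (hg : ∀ t ∈ Icc a b, IsLUB (range fun i => E i t) (g t)) :
    IncrementsLeIntegralOn K g (Icc a b) := by
  intro t ht t' ht' htt' hint
  have hsub : Icc t t' ⊆ Icc a b := Icc_subset_Icc ht.1 ht'.2
  have hincr : ∀ f f' : ℝ → ℝ, (∀ σ ∈ Icc t t', HasDerivAt f (f' σ) σ) →
      (∀ σ ∈ Icc t t', f' σ ≤ K * g σ) → f t' - f t ≤ K * ∫ σ in t..t', g σ := by
    intro f f' hf hf'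
    rw [← intervalIntegral.integral_const_mul]
    exact intervalIntegral.sub_le_integral_of_hasDeriv_right_of_le htt'
      (fun σ hσ => (hf σ hσ).continuousAt.continuousWithinAt)
      (fun σ hσ => (hf σ (Ioo_subset_Icc_self hσ)).hasDerivWithinAt)
      (((intervalIntegrable_iff_integrableOn_Icc_of_le htt').1 hint).const_mul K)
      (fun σ hσ => hf' σ (Ioo_subset_Icc_self hσ))
  have hup : g t + K * ∫ σ in t..t', g σ ∈ upperBounds (range fun i => E i t') := by
    rintro _ ⟨i, rfl⟩
    have := hincr (E i) (E' i) (fun σ hσ => hE i σ (hsub hσ))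
      (fun σ hσ => (le_abs_self _).trans (hE' i σ (hsub hσ)))
    linarith [(hg t ht).1 ⟨i, rfl⟩]
  have hdown : g t' + K * ∫ σ in t..t', g σ ∈ upperBounds (range fun i => E i t) := by
    rintro _ ⟨i, rfl⟩
    have := hincr (fun σ => -E i σ) (fun σ => -E' i σ) (fun σ hσ => (hE i σ (hsub hσ)).neg)
      (fun σ hσ => (neg_le_abs _).trans (hE' i σ (hsub hσ)))
    linarith [(hg t' ht').1 ⟨i, rfl⟩]
  rw [abs_sub_le_iff]
  constructor <;> linarith [(hg t' ht').2 hup, (hg t ht).2 hdown]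

theorem le_mul_exp_of_isLUB (hK : 0 ≤ K) (hab : a ≤ b)
    (hE : ∀ i, ∀ t ∈ Icc a b, HasDerivAt (E i) (E' i t) t)
    (hE' : ∀ i, ∀ t ∈ Icc a b, |E' i t| ≤ K * g t)
    (hg : ∀ t ∈ Icc a b, IsLUB (range fun i => E i t) (g t)) (hg0 : ∀ t ∈ Icc a b, 0 ≤ g t) :
    ∀ t ∈ Icc a b, g t ≤ g b * exp (K * (b - t)) := by
  -- `g` is only controlled on `[a, b]`; `G` extends it constantly, which makes it globally l.s.c.
  set G : ℝ → ℝ := fun t => g (projIcc a b hab t)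
  have hG : ∀ t ∈ Icc a b, G t = g t := fun t ht => by simp only [G, projIcc_of_mem hab ht]
  have hEcont : ∀ i, ContinuousOn (E i) (Icc a b) := fun i =>
    continuousOn_of_forall_continuousAt fun t ht => (hE i t ht).continuousAt
  have hGlsc : LowerSemicontinuous G := lowerSemicontinuous_of_isLUB
    (fun i => (hEcont i).comp_continuous continuous_projIcc.subtype_val
      fun t => (projIcc a b hab t).2)
    fun t => hg _ (projIcc a b hab t).2
  have hGinc : IncrementsLeIntegralOn K G (Icc a b) :=
    incrementsLeIntegralOn_of_isLUB hE (fun i t ht => hG t ht ▸ hE' i t ht)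
      fun t ht => hG t ht ▸ hg t ht
  have hGint := hGinc.integrableOn hGlsc (fun t => hg0 _ (projIcc a b hab t).2) hK
  intro t ht
  have hsub : Icc t b ⊆ Icc a b := Icc_subset_Icc_left ht.1
  have := (hGinc.mono hsub).left_le_mul_exp hK ht.2 <|
    (intervalIntegrable_iff_integrableOn_Icc_of_le ht.2).2 (hGint.mono_set hsub)
  rwa [hG t ht, hG b ⟨hab, le_rfl⟩] at this

end Envelope

section WeightedGraph

variable {V : Type*} {w : V → V → ℝ}

theorem summable_weight_mul (hnonneg : ∀ x y, 0 ≤ w x y) (hlf : ∀ x, {y | 0 < w x y}.Finite)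
    (x : V) (f : V → ℝ) : Summable fun y => w x y * f y :=
  summable_of_ne_finset_zero (s := (hlf x).toFinset) fun y hy => by
    rw [Set.Finite.mem_toFinset] at hy
    rw [le_antisymm (not_lt.1 hy) (hnonneg x y), zero_mul]

theorem summable_weight (hnonneg : ∀ x y, 0 ≤ w x y) (hlf : ∀ x, {y | 0 < w x y}.Finite) (x : V) :
    Summable (w x) := by
  simpa using summable_weight_mul hnonneg hlf x 1

theorem weight_le_vmu (hnonneg : ∀ x y, 0 ≤ w x y) (hlf : ∀ x, {y | 0 < w x y}.Finite) (x y : V) :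
    w x y ≤ vmu w x :=
  (summable_weight hnonneg hlf x).le_tsum y fun z _ => hnonneg x z

theorem glap_mul_vmu (hnonneg : ∀ x y, 0 ≤ w x y) (hlf : ∀ x, {y | 0 < w x y}.Finite)
    (f : V → ℝ) (x : V) : glap w f x * vmu w x = ∑' y, w x y * (f y - f x) := by
  rcases eq_or_ne (vmu w x) 0 with h0 | h0
  · have hw : ∀ y, w x y = 0 := fun y =>
      le_antisymm (h0 ▸ weight_le_vmu hnonneg hlf x y) (hnonneg x y)
    simp [h0, hw]
  · exact div_mul_cancel₀ _ h0

theorem sum_tsum_weight_mul_le (hsymm : ∀ x y, w x y = w y x) (hnonneg : ∀ x y, 0 ≤ w x y)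
    (hlf : ∀ x, {y | 0 < w x y}.Finite) {h : V → ℝ} (h0 : ∀ y, 0 ≤ h y)
    (hh : Summable fun y => h y * vmu w y) (F : Finset V) :
    ∑ x ∈ F, ∑' y, w x y * h y ≤ ∑' y, h y * vmu w y := by
  have hsum := fun x (_ : x ∈ F) => summable_weight_mul hnonneg hlf x h
  rw [← Summable.tsum_finsetSum hsum]
  refine Summable.tsum_le_tsum (fun y => ?_) (summable_sum hsum) hh
  rw [← Finset.sum_mul, mul_comm]
  refine mul_le_mul_of_nonneg_left ?_ (h0 y)
  simp_rw [hsymm _ y]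
  exact (summable_weight hnonneg hlf y).sum_le_tsum F fun z _ => hnonneg y z

theorem abs_two_mul_glap_mul_vmu_le (hnonneg : ∀ x y, 0 ≤ w x y)
    (hlf : ∀ x, {y | 0 < w x y}.Finite) (f : V → ℝ) (x : V) :
    |2 * f x * glap w f x * vmu w x| ≤ 3 * (f x ^ 2 * vmu w x) + ∑' y, w x y * f y ^ 2 := by
  have hsum := summable_weight_mul hnonneg hlf x
  have hbound : ∑' y, w x y * (3 * f x ^ 2 + f y ^ 2) =
      3 * (f x ^ 2 * vmu w x) + ∑' y, w x y * f y ^ 2 := by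
    simp_rw [mul_add]
    rw [(hsum _).tsum_add (hsum _), vmu, ← tsum_mul_left, ← tsum_mul_left]
    congr 1
    exact tsum_congr fun y => by ring
  rw [mul_assoc, glap_mul_vmu hnonneg hlf, ← tsum_mul_left, ← hbound, ← Real.norm_eq_abs]
  refine tsum_of_norm_bounded (hsum _).hasSum fun y => ?_
  rw [Real.norm_eq_abs, mul_left_comm, abs_mul, abs_of_nonneg (hnonneg x y)]
  refine mul_le_mul_of_nonneg_left (abs_le.2 ⟨?_, ?_⟩) (hnonneg x y) <;>
    nlinarith [sq_nonneg (f x + f y), sq_nonneg (f x - f y)]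

theorem abs_sum_energy_deriv_le (hsymm : ∀ x y, w x y = w y x) (hnonneg : ∀ x y, 0 ≤ w x y)
    (hlf : ∀ x, {y | 0 < w x y}.Finite) {f c : V → ℝ} {M : ℝ} (hM0 : 0 ≤ M)
    (hM : ∀ x, |c x| ≤ M) (hf : Summable fun x => f x ^ 2 * vmu w x) (F : Finset V) :
    |∑ x ∈ F, 2 * f x * (glap w f x + c x * f x) * vmu w x| ≤
      (4 + 2 * M) * ∑' x, f x ^ 2 * vmu w x := by
  have hterm0 : ∀ x, 0 ≤ f x ^ 2 * vmu w x := fun x =>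
    mul_nonneg (sq_nonneg _) (tsum_nonneg (hnonneg x))
  have hF : ∑ x ∈ F, f x ^ 2 * vmu w x ≤ ∑' x, f x ^ 2 * vmu w x :=
    hf.sum_le_tsum F fun x _ => hterm0 x
  have hpot : ∀ x, |2 * f x * (c x * f x) * vmu w x| ≤ 2 * M * (f x ^ 2 * vmu w x) := fun x => by
    rw [show 2 * f x * (c x * f x) * vmu w x = 2 * c x * (f x ^ 2 * vmu w x) by ring, abs_mul,
      abs_mul, abs_two, abs_of_nonneg (hterm0 x)]
    exact mul_le_mul_of_nonneg_right (by linarith [hM x]) (hterm0 x)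
  calc |∑ x ∈ F, 2 * f x * (glap w f x + c x * f x) * vmu w x|
      ≤ ∑ x ∈ F, ((3 + 2 * M) * (f x ^ 2 * vmu w x) + ∑' y, w x y * f y ^ 2) := by
        refine (Finset.abs_sum_le_sum_abs _ _).trans (Finset.sum_le_sum fun x _ => ?_)
        rw [mul_add, add_mul]
        linarith [abs_add_le (2 * f x * glap w f x * vmu w x) (2 * f x * (c x * f x) * vmu w x),
          abs_two_mul_glap_mul_vmu_le hnonneg hlf f x, hpot x]
    _ ≤ (3 + 2 * M) * ∑' x, f x ^ 2 * vmu w x + ∑' x, f x ^ 2 * vmu w x := by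
        rw [Finset.sum_add_distrib, ← Finset.mul_sum]
        gcongr
        exact sum_tsum_weight_mul_le hsymm hnonneg hlf (fun y => sq_nonneg (f y)) hf F
    _ = (4 + 2 * M) * ∑' x, f x ^ 2 * vmu w x := by ring

end WeightedGraph

/-- Backward uniqueness for the heat equation with bounded potential on a weighted graph:
if `u(·,b) ≡ 0` then `u ≡ 0` on `V × [a,b]`. -/
theorem backward_uniqueness {V : Type*} (w : V → V → ℝ)
    (hsymm : ∀ x y, w x y = w y x) (hnonneg : ∀ x y, 0 ≤ w x y)
    (hlf : ∀ x, {y | 0 < w x y}.Finite)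
    (a b : ℝ) (hab : a ≤ b) (u : V → ℝ → ℝ) (c : V → ℝ)
    (hc : ∃ M : ℝ, ∀ x, |c x| ≤ M)
    (heq : ∀ x : V, ∀ t ∈ Set.Icc a b,
      HasDerivAt (u x) (glap w (fun y => u y t) x + c x * u x t) t)
    (hW12 : ∀ t ∈ Set.Icc a b, Summable (fun x => (u x t)^2 * vmu w x) ∧
      Summable (fun x => (glap w (fun y => u y t) x + c x * u x t)^2 * vmu w x) ∧
      Summable (fun x => gnormSq w (fun y => u y t) x * vmu w x))
    (hb : ∀ x, u x b = 0) :
    ∀ x : V, ∀ t ∈ Set.Icc a b, u x t = 0 := by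
  obtain ⟨M, hM⟩ := hc
  have hterm0 : ∀ x t, 0 ≤ u x t ^ 2 * vmu w x := fun x t =>
    mul_nonneg (sq_nonneg _) (tsum_nonneg (hnonneg x))
  have hI : ∀ t ∈ Icc a b, Ifun w u t ≤ Ifun w u b * exp ((4 + 2 * |M|) * (b - t)) :=
    le_mul_exp_of_isLUB (E := fun (F : Finset V) t => ∑ x ∈ F, u x t ^ 2 * vmu w x)
      (E' := fun F t => ∑ x ∈ F, 2 * u x t * (glap w (fun y => u y t) x + c x * u x t) * vmu w x)
      (by positivity) hab
      (fun F t ht => HasDerivAt.fun_sum fun x _ =>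
        (((heq x t ht).fun_pow 2).mul_const (vmu w x)).congr_deriv (by norm_num))
      (fun F t ht => abs_sum_energy_deriv_le hsymm hnonneg hlf (abs_nonneg M)
        (fun x => (hM x).trans (le_abs_self M)) (hW12 t ht).1 F)
      (fun t ht => isLUB_hasSum (fun x => hterm0 x t) (hW12 t ht).1.hasSum)
      (fun t _ => tsum_nonneg fun x => hterm0 x t)
  have hIb : Ifun w u b = 0 := by simp [Ifun, hb]
  intro x t ht
  rcases eq_or_ne (vmu w x) 0 with hμ | hμ
  · refine eq_zero_of_hasDerivAt_const_mul_of_eq_zero_right (c := c x) (fun s hs => ?_) (hb x) t ht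
    simpa [glap, hμ] using heq x s hs
  · have hμpos : 0 < vmu w x := (tsum_nonneg (hnonneg x)).lt_of_ne' hμ
    have hxt : u x t ^ 2 * vmu w x ≤ 0 :=
      ((hW12 t ht).1.le_tsum x fun y _ => hterm0 y t).trans ((hI t ht).trans_eq (by simp [hIb]))
    exact pow_eq_zero_iff two_ne_zero |>.1 <|
      le_antisymm (nonpos_of_mul_nonpos_left (by linarith) hμpos) (sq_nonneg _)
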